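/- Let X be a Tychonoff space. For every open set U ⊆ βX, the set {μ ∈ R_min(X) : S(μ) ∩ U ≠ ∅} is open in R_min(X) with the topology of pointwise convergence; that is, the set-valued support map μ ↦ S(μ) on R_min(X) is lower semicontinuous. -/

import Mathlib

/-!
Call `O ⊆ βX` negligible for `μ` if `μ f = μ g` whenever `βf = βg` off `O`; a point lies outside
`S(μ)` iff it has a negligible open neighbourhood. For a monotone, weakly additive `μ` (every
member of `R_min(X)` is one), negligibility is local: if `βf = βg` off `U` and every point of `U`
has a negligible neighbourhood, cover the compact set `{|βf - βg| ≥ ε} ⊆ U` by finitely many of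
them, take a subordinate partition of unity `ρ`, and pass from `βg` to `βg + ∑ ρᵢ (βf - βg)` one
negligible summand at a time; the result is `ε`-close to `βf`, and `μ` is `1`-Lipschitz in the sup
norm. Hence `S(μ)` meets an open `U` iff `U` is not negligible, i.e. iff `μ f ≠ μ g` for some pair
`f, g` with `βf = βg` off `U`, a condition that is open for pointwise convergence.
-/

open Set

/-- The Čech–Stone extension `βf : βX → ℝ` of a bounded continuous function `f : X → ℝ`
(obtained by extending `f`, viewed as a map into the compact interval `[-‖f‖, ‖f‖]`,
over the Stone–Čech compactification). -/
noncomputable def betaExt {X : Type*} [TopologicalSpace X] (f : BoundedContinuousFunction X ℝ) :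
    StoneCech X → ℝ :=
  Subtype.val ∘ stoneCechExtend
    (Continuous.subtype_mk f.continuous
      (fun x => Set.mem_Icc.mpr (abs_le.mp (Real.norm_eq_abs (f x) ▸ f.norm_coe_le_norm x)))
      : Continuous fun x => (⟨f x, _⟩ : Set.Icc (-‖f‖) ‖f‖))

variable {X : Type*} [TopologicalSpace X]

/-- `μ` is *normed*: `μ 1 = 1`. -/
def BNormed (μ : BoundedContinuousFunction X ℝ → ℝ) : Prop := μ 1 = 1

/-- `μ` is *weakly additive*: `μ (f + c·1) = μ f + c`. -/
def BWeaklyAdditive (μ : BoundedContinuousFunction X ℝ → ℝ) : Prop :=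
  ∀ (f : BoundedContinuousFunction X ℝ) (c : ℝ),
    μ (f + BoundedContinuousFunction.const X c) = μ f + c

/-- `μ` *preserves min*. -/
def BPreservesMin (μ : BoundedContinuousFunction X ℝ → ℝ) : Prop :=
  ∀ f g : BoundedContinuousFunction X ℝ, μ (f ⊓ g) = min (μ f) (μ g)

/-- `μ` *preserves max*. -/
def BPreservesMax (μ : BoundedContinuousFunction X ℝ → ℝ) : Prop :=
  ∀ f g : BoundedContinuousFunction X ℝ, μ (f ⊔ g) = max (μ f) (μ g)

/-- `μ` *weakly preserves min*: `μ (min{f, c·1}) = min{μ f, c}`. -/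
def BWeaklyPreservesMin (μ : BoundedContinuousFunction X ℝ → ℝ) : Prop :=
  ∀ (f : BoundedContinuousFunction X ℝ) (c : ℝ),
    μ (f ⊓ BoundedContinuousFunction.const X c) = min (μ f) c

/-- `μ` *weakly preserves max*: `μ (max{f, c·1}) = max{μ f, c}`. -/
def BWeaklyPreservesMax (μ : BoundedContinuousFunction X ℝ → ℝ) : Prop :=
  ∀ (f : BoundedContinuousFunction X ℝ) (c : ℝ),
    μ (f ⊔ BoundedContinuousFunction.const X c) = max (μ f) c

/-- The support `S(μ) ⊆ βX` of a functional `μ` on `C*(X)`: points `p ∈ βX` such that every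
open neighbourhood `O` of `p` admits `f, g ∈ C*(X)` with `βf = βg` off `O` and `μ f ≠ μ g`. -/
def betaSupport (μ : BoundedContinuousFunction X ℝ → ℝ) : Set (StoneCech X) :=
  {p | ∀ O : Set (StoneCech X), IsOpen O → p ∈ O →
    ∃ f g : BoundedContinuousFunction X ℝ,
      (∀ q ∉ O, betaExt f q = betaExt g q) ∧ μ f ≠ μ g}

/-- `R_min(X)`: normed, weakly additive functionals preserving min and weakly preserving max. -/
def RMin (X : Type*) [TopologicalSpace X] : Set (BoundedContinuousFunction X ℝ → ℝ) :=
  {μ | BNormed μ ∧ BWeaklyAdditive μ ∧ BPreservesMin μ ∧ BWeaklyPreservesMax μ}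

/-- `R_max(X)`: normed, weakly additive functionals preserving max and weakly preserving min. -/
def RMax (X : Type*) [TopologicalSpace X] : Set (BoundedContinuousFunction X ℝ → ℝ) :=
  {μ | BNormed μ ∧ BWeaklyAdditive μ ∧ BPreservesMax μ ∧ BWeaklyPreservesMin μ}

/-- `R_min(X)_c`: members of `R_min(X)` with compact support, i.e. `∅ ≠ S(μ) ⊆ η(X)`. -/
def RMinC (X : Type*) [TopologicalSpace X] : Set (BoundedContinuousFunction X ℝ → ℝ) :=
  {μ | μ ∈ RMin X ∧ (betaSupport μ).Nonempty ∧
    betaSupport μ ⊆ Set.range (stoneCechUnit : X → StoneCech X)}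

/-- `R_max(X)_c`: members of `R_max(X)` with compact support, i.e. `∅ ≠ S(μ) ⊆ η(X)`. -/
def RMaxC (X : Type*) [TopologicalSpace X] : Set (BoundedContinuousFunction X ℝ → ℝ) :=
  {μ | μ ∈ RMax X ∧ (betaSupport μ).Nonempty ∧
    betaSupport μ ⊆ Set.range (stoneCechUnit : X → StoneCech X)}

theorem continuous_betaExt (f : BoundedContinuousFunction X ℝ) : Continuous (betaExt f) :=
  continuous_subtype_val.comp (continuous_stoneCechExtend _)

@[simp]
theorem betaExt_stoneCechUnit (f : BoundedContinuousFunction X ℝ) (x : X) :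
    betaExt f (stoneCechUnit x) = f x :=
  congrArg Subtype.val (congrFun (stoneCechExtend_extends _) x)

noncomputable def ofStoneCech (H : C(StoneCech X, ℝ)) : BoundedContinuousFunction X ℝ :=
  (BoundedContinuousFunction.mkOfCompact H).compContinuous
    ⟨stoneCechUnit, continuous_stoneCechUnit⟩

@[simp]
theorem ofStoneCech_apply (H : C(StoneCech X, ℝ)) (x : X) :
    ofStoneCech H x = H (stoneCechUnit x) :=
  rfl

theorem betaExt_ofStoneCech (H : C(StoneCech X, ℝ)) : betaExt (ofStoneCech H) = H :=
  stoneCech_hom_ext (continuous_betaExt _) H.continuous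
    (funext fun x => by simp)

theorem ofStoneCech_betaExt (f : BoundedContinuousFunction X ℝ) :
    ofStoneCech ⟨betaExt f, continuous_betaExt f⟩ = f := by
  ext x
  simp

theorem BPreservesMin.monotone {μ : BoundedContinuousFunction X ℝ → ℝ} (hμ : BPreservesMin μ) :
    Monotone μ := fun f g hfg => by
  simpa [inf_eq_left.mpr hfg] using hμ f g

theorem abs_sub_le_of_forall_abs_sub_le {μ : BoundedContinuousFunction X ℝ → ℝ}
    (hmono : Monotone μ) (hadd : BWeaklyAdditive μ) {f g : BoundedContinuousFunction X ℝ}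
    {ε : ℝ} (h : ∀ x, |f x - g x| ≤ ε) : |μ f - μ g| ≤ ε := by
  have hfg : f ≤ g + BoundedContinuousFunction.const X ε := fun x =>
    show f x ≤ g x + ε by linarith [(abs_le.mp (h x)).2]
  have hgf : g ≤ f + BoundedContinuousFunction.const X ε := fun x =>
    show g x ≤ f x + ε by linarith [(abs_le.mp (h x)).1]
  have h₁ := hmono hfg
  have h₂ := hmono hgf
  rw [hadd] at h₁ h₂
  exact abs_le.mpr ⟨by linarith, by linarith⟩

def IsNegligible (μ : BoundedContinuousFunction X ℝ → ℝ) (O : Set (StoneCech X)) : Prop :=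
  ∀ f g : BoundedContinuousFunction X ℝ, (∀ q ∉ O, betaExt f q = betaExt g q) → μ f = μ g

theorem notMem_betaSupport_iff {μ : BoundedContinuousFunction X ℝ → ℝ} {p : StoneCech X} :
    p ∉ betaSupport μ ↔ ∃ O, IsOpen O ∧ p ∈ O ∧ IsNegligible μ O := by
  simp [betaSupport, IsNegligible]

theorem IsNegligible.apply_add_eq {μ : BoundedContinuousFunction X ℝ → ℝ} {O : Set (StoneCech X)}
    (hO : IsNegligible μ O) (G : C(StoneCech X, ℝ)) {φ : C(StoneCech X, ℝ)}
    (hφ : tsupport φ ⊆ O) : μ (ofStoneCech (G + φ)) = μ (ofStoneCech G) :=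
  hO _ _ fun q hq => by
    simp [betaExt_ofStoneCech, image_eq_zero_of_notMem_tsupport (fun h => hq (hφ h))]

theorem IsNegligible.apply_add_sum_eq {μ : BoundedContinuousFunction X ℝ → ℝ} {ι : Type*}
    {O : ι → Set (StoneCech X)} (hO : ∀ i, IsNegligible μ (O i)) (G : C(StoneCech X, ℝ))
    {φ : ι → C(StoneCech X, ℝ)} (hφ : ∀ i, tsupport (φ i) ⊆ O i) (s : Finset ι) :
    μ (ofStoneCech (G + ∑ i ∈ s, φ i)) = μ (ofStoneCech G) := by
  classical
  induction s using Finset.induction_on with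
  | empty => simp
  | insert i s hi ih =>
    rw [Finset.sum_insert hi, add_left_comm, add_comm, (hO i).apply_add_eq _ (hφ i), ih]

theorem PartitionOfUnity.abs_add_sum_mul_sub_sub_le {Y ι : Type*} [TopologicalSpace Y]
    [Fintype ι] {K : Set Y} (ρ : PartitionOfUnity ι Y K) (F G : C(Y, ℝ)) {ε : ℝ} (hε : 0 ≤ ε)
    (hFG : ∀ q ∉ K, |F q - G q| ≤ ε) (q : Y) :
    |(G + ∑ i, ρ i * (F - G)) q - F q| ≤ ε := by
  have hρsum : ∑ i, ρ i q = ∑ᶠ i, ρ i q := (finsum_eq_sum_of_fintype _).symm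
  have hq : (G + ∑ i, ρ i * (F - G)) q - F q = (∑ i, ρ i q - 1) * (F q - G q) := by
    simp only [ContinuousMap.add_apply, ContinuousMap.sum_apply, ContinuousMap.mul_apply,
      ContinuousMap.sub_apply, ← Finset.sum_mul]
    ring
  rw [hq, abs_mul, hρsum]
  by_cases hqK : q ∈ K
  · simpa [ρ.sum_eq_one hqK] using hε
  · have h01 : |∑ᶠ i, ρ i q - 1| ≤ 1 :=
      abs_le.mpr ⟨by linarith [ρ.sum_nonneg q], by linarith [ρ.sum_le_one q]⟩
    simpa using mul_le_mul h01 (hFG q hqK) (abs_nonneg _) zero_le_one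

theorem isNegligible_of_forall_exists_isNegligible {μ : BoundedContinuousFunction X ℝ → ℝ}
    (hmono : Monotone μ) (hadd : BWeaklyAdditive μ) {U : Set (StoneCech X)}
    (hU : ∀ p ∈ U, ∃ O, IsOpen O ∧ p ∈ O ∧ IsNegligible μ O) : IsNegligible μ U := by
  intro f g hfg
  choose! O hOopen hpO hOnegl using hU
  refine eq_of_abs_sub_nonpos (le_of_forall_pos_le_add fun ε hε => ?_)
  let F : C(StoneCech X, ℝ) := ⟨betaExt f, continuous_betaExt f⟩
  let G : C(StoneCech X, ℝ) := ⟨betaExt g, continuous_betaExt g⟩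
  let K : Set (StoneCech X) := {q | ε ≤ |F q - G q|}
  have hKclosed : IsClosed K := isClosed_le continuous_const (F - G).continuous.abs
  have hKU : K ⊆ U := fun q hq => by
    by_contra hqU
    have : ε ≤ 0 := by simpa [K, F, G, hfg q hqU] using hq
    linarith
  obtain ⟨t, ht⟩ := hKclosed.isCompact.elim_finite_subcover (fun p : U => O p)
    (fun p => hOopen p p.2) (fun q hq => mem_iUnion.mpr ⟨⟨q, hKU hq⟩, hpO q (hKU hq)⟩)
  let V : t → Set (StoneCech X) := fun p => O p
  obtain ⟨ρ, hρ⟩ := PartitionOfUnity.exists_isSubordinate hKclosed V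
    (fun p => hOopen _ p.1.2) (fun q hq => by simpa [V] using ht hq)
  -- Each summand of `H - G` lives in a negligible set, so `μ` cannot tell `H` from `G`;
  -- yet `H` is within `ε` of `F`.
  let H : C(StoneCech X, ℝ) := G + ∑ i, ρ i * (F - G)
  have hHg : μ (ofStoneCech H) = μ g := by
    rw [IsNegligible.apply_add_sum_eq (O := V) (fun i => hOnegl _ i.1.2) G
      (fun i => (tsupport_mul_subset_left).trans (hρ i)), ofStoneCech_betaExt]
  have hHf : ∀ x, |ofStoneCech H x - f x| ≤ ε := fun x => by
    rw [ofStoneCech_apply, ← betaExt_stoneCechUnit f x]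
    exact ρ.abs_add_sum_mul_sub_sub_le F G hε.le (fun q hq => (not_le.mp hq).le) _
  calc |μ f - μ g| = |μ (ofStoneCech H) - μ f| := by rw [hHg, abs_sub_comm]
    _ ≤ 0 + ε := by simpa using abs_sub_le_of_forall_abs_sub_le hmono hadd hHf

theorem betaSupport_inter_nonempty_iff {μ : BoundedContinuousFunction X ℝ → ℝ}
    (hmono : Monotone μ) (hadd : BWeaklyAdditive μ) {U : Set (StoneCech X)} (hU : IsOpen U) :
    (betaSupport μ ∩ U).Nonempty ↔ ¬ IsNegligible μ U := by
  constructor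
  · rintro ⟨p, hpS, hpU⟩ hUnegl
    obtain ⟨f, g, hfg, hne⟩ := hpS U hU hpU
    exact hne (hUnegl f g hfg)
  · intro hU'
    by_contra hempty
    refine hU' (isNegligible_of_forall_exists_isNegligible hmono hadd fun p hp => ?_)
    exact notMem_betaSupport_iff.mp fun hpS => hempty ⟨p, hpS, hp⟩

theorem isOpen_setOf_not_isNegligible (U : Set (StoneCech X)) :
    IsOpen {μ : BoundedContinuousFunction X ℝ → ℝ | ¬ IsNegligible μ U} := by
  simp only [IsNegligible, not_forall, ofPred_exists]
  exact isOpen_iUnion fun f => isOpen_iUnion fun g => isOpen_iUnion fun _ =>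
    isOpen_ne_fun (continuous_apply f) (continuous_apply g)

theorem statement11_general (X : Type*) [TopologicalSpace X] :
    ∀ U : Set (StoneCech X), IsOpen U →
      IsOpen {ν : RMin X | ((betaSupport (ν : BoundedContinuousFunction X ℝ → ℝ)) ∩ U).Nonempty} := by
  intro U hU
  have hset : {ν : RMin X | (betaSupport (ν : BoundedContinuousFunction X ℝ → ℝ) ∩ U).Nonempty} =
      Subtype.val ⁻¹' {μ | ¬ IsNegligible μ U} := by
    ext ⟨μ, -, hadd, hmin, -⟩
    exact betaSupport_inter_nonempty_iff hmin.monotone hadd hU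
  rw [hset]
  exact (isOpen_setOf_not_isNegligible U).preimage continuous_subtype_val

/-- the support map on `R_min(X)` is lower semicontinuous: for each open
`U ⊆ βX`, the set `{μ ∈ R_min(X) : S(μ) ∩ U ≠ ∅}` is open in `R_min(X)` (with the subspace
topology inherited from the product topology of pointwise convergence). -/
theorem statement11 (X : Type*) [TopologicalSpace X] [T35Space X] :
    ∀ U : Set (StoneCech X), IsOpen U →
      IsOpen {ν : RMin X | ((betaSupport (ν : BoundedContinuousFunction X ℝ → ℝ)) ∩ U).Nonempty} :=
  statement11_general X
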